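/- arXiv:2008.03272 — 5 statements merged into one kernel-verified Lean document; each statement's English description precedes it below -/
import Mathlib

section
/- Let α, β ∈ ℝ, u ∈ ℂ and Ω ∈ ℝ with Ω² = β² − |u|². Define M(λ) = [[4λ² + 4iλΩ − (α²+β²), 4iλu],[4iλu*, 4λ² − 4iλΩ − (α²+β²)]]. Then for every λ ∈ ℂ, M(λ) · M(−λ) = ((2λ − i|β|)² − α²)·((2λ + i|β|)² − α²)·I. Consequently, whenever (2λ − i|β|)² ≠ α² and (2λ + i|β|)² ≠ α², the scaled boundary matrix K₀(λ) = M(λ)/((2λ − i|β|)² − α²) satisfies (K₀(λ))⁻¹ = K₀(−λ). -/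
open Complex Matrix

/-- The unscaled boundary matrix `M(λ) = ((2λ−i|β|)²−α²)·K₀(λ)` of the new integrable
boundary condition for NLS. -/
noncomputable def unscaledK (α β : ℝ) (u : ℂ) (Ω : ℝ) (lam : ℂ) :
    Matrix (Fin 2) (Fin 2) ℂ :=
  !![4 * lam ^ 2 + 4 * I * lam * (Ω : ℂ) - ((α : ℂ) ^ 2 + (β : ℂ) ^ 2),
      4 * I * lam * u;
      4 * I * lam * (starRingEnd ℂ u),
      4 * lam ^ 2 - 4 * I * lam * (Ω : ℂ) - ((α : ℂ) ^ 2 + (β : ℂ) ^ 2)]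

/-!
Writing `M(λ) = c(λ) • 1 + 4iλ • X` with `c(λ) = 4λ² − (α² + β²)` and the traceless matrix
`X = [[Ω, u], [u*, −Ω]]`, Cayley–Hamilton gives `X² = (Ω² + |u|²) • 1 = β² • 1`. Since `c` is even
in `λ`, `M(λ) M(−λ) = (c² + 16λ²β²) • 1`, and `c² + 16λ²β²` is the difference of squares
`(c − 4iλ|β|)(c + 4iλ|β|) = ((2λ − i|β|)² − α²)((2λ + i|β|)² − α²)`.
-/

theorem Matrix.traceless_fin_two_mul_self {R : Type*} [CommRing R] (a b c : R) :
    !![a, b; c, -a] * !![a, b; c, -a] = (a ^ 2 + b * c) • (1 : Matrix (Fin 2) (Fin 2) R) := by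
  ext i j
  fin_cases i <;> fin_cases j <;> simp [Matrix.mul_apply, Fin.sum_univ_two] <;> ring

theorem Matrix.smul_one_add_mul_smul_one_sub {n R : Type*} [Fintype n] [DecidableEq n]
    [CommRing R] {X : Matrix n n R} {s : R} (hX : X * X = s • 1) (c d : R) :
    (c • 1 + d • X) * (c • 1 - d • X) = (c ^ 2 - d ^ 2 * s) • (1 : Matrix n n R) := by
  simp only [add_mul, mul_sub, smul_mul_smul_comm, one_mul, mul_one, hX, smul_smul, sub_smul,
    mul_comm d c, pow_two, mul_assoc]
  abel

theorem Matrix.inv_inv_smul_of_mul_eq_smul_one {n K : Type*} [Fintype n] [DecidableEq n] [Field K]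
    {A B : Matrix n n K} {a b : K} (hAB : A * B = (a * b) • 1) (ha : a ≠ 0) (hb : b ≠ 0) :
    (a⁻¹ • A)⁻¹ = b⁻¹ • B := by
  apply Matrix.inv_eq_right_inv
  rw [smul_mul_smul_comm, hAB, smul_smul]
  field_simp
  exact one_smul K 1

theorem Complex.sq_two_mul_sub_I_mul_sub_mul_sq_two_mul_add_I_mul_sub (lam a b : ℂ) :
    ((2 * lam - I * b) ^ 2 - a) * ((2 * lam + I * b) ^ 2 - a) =
      (4 * lam ^ 2 - (a + b ^ 2)) ^ 2 + 16 * lam ^ 2 * b ^ 2 := by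
  linear_combination
    (b ^ 2 * (8 * lam ^ 2 + I ^ 2 * b ^ 2 - 2 * a - b ^ 2) - 16 * lam ^ 2 * b ^ 2) * I_sq

noncomputable def boundarySpin (u : ℂ) (Ω : ℝ) : Matrix (Fin 2) (Fin 2) ℂ :=
  !![(Ω : ℂ), u; starRingEnd ℂ u, -(Ω : ℂ)]

theorem boundarySpin_mul_self (u : ℂ) (Ω : ℝ) :
    boundarySpin u Ω * boundarySpin u Ω = ((Ω : ℂ) ^ 2 + ((‖u‖ : ℝ) : ℂ) ^ 2) • 1 := by
  rw [boundarySpin, Matrix.traceless_fin_two_mul_self, Complex.mul_conj, Complex.normSq_eq_norm_sq]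
  push_cast
  rfl

theorem unscaledK_eq (α β : ℝ) (u : ℂ) (Ω : ℝ) (lam : ℂ) :
    unscaledK α β u Ω lam =
      (4 * lam ^ 2 - ((α : ℂ) ^ 2 + (β : ℂ) ^ 2)) • 1 + (4 * I * lam) • boundarySpin u Ω := by
  ext i j
  fin_cases i <;> fin_cases j <;> simp [unscaledK, boundarySpin] <;> ring

theorem unscaledK_mul_unscaledK_neg (α β : ℝ) (u : ℂ) (Ω : ℝ) (hΩ : Ω ^ 2 = β ^ 2 - ‖u‖ ^ 2)
    (lam : ℂ) :
    unscaledK α β u Ω lam * unscaledK α β u Ω (-lam) =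
      ((4 * lam ^ 2 - ((α : ℂ) ^ 2 + (β : ℂ) ^ 2)) ^ 2 + 16 * lam ^ 2 * (β : ℂ) ^ 2) • 1 := by
  have hspin : boundarySpin u Ω * boundarySpin u Ω = ((β : ℂ) ^ 2) • 1 := by
    rw [boundarySpin_mul_self]
    congr 1
    exact_mod_cast (eq_sub_iff_add_eq.mp hΩ)
  rw [unscaledK_eq, unscaledK_eq, neg_sq, mul_neg, neg_smul, ← sub_eq_add_neg,
    Matrix.smul_one_add_mul_smul_one_sub hspin]
  congr 1
  linear_combination (-16 * lam ^ 2 * (β : ℂ) ^ 2) * I_sq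

/-- `M(λ)·M(−λ) = ((2λ−i|β|)²−α²)·((2λ+i|β|)²−α²)·I`, and consequently the scaled
boundary matrix `K₀(λ) = M(λ)/((2λ−i|β|)²−α²)` satisfies `(K₀(λ))⁻¹ = K₀(−λ)`. -/
theorem boundary_matrix_inverse (α β : ℝ) (u : ℂ) (Ω : ℝ)
    (hΩ : Ω ^ 2 = β ^ 2 - ‖u‖ ^ 2) :
    (∀ lam : ℂ,
      unscaledK α β u Ω lam * unscaledK α β u Ω (-lam) =
        (((2 * lam - I * ((|β| : ℝ) : ℂ)) ^ 2 - (α : ℂ) ^ 2) *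
          ((2 * lam + I * ((|β| : ℝ) : ℂ)) ^ 2 - (α : ℂ) ^ 2)) •
            (1 : Matrix (Fin 2) (Fin 2) ℂ)) ∧
    (∀ lam : ℂ, (2 * lam - I * ((|β| : ℝ) : ℂ)) ^ 2 ≠ (α : ℂ) ^ 2 →
      (2 * lam + I * ((|β| : ℝ) : ℂ)) ^ 2 ≠ (α : ℂ) ^ 2 →
      (((2 * lam - I * ((|β| : ℝ) : ℂ)) ^ 2 - (α : ℂ) ^ 2)⁻¹ • unscaledK α β u Ω lam)⁻¹ =
        ((2 * (-lam) - I * ((|β| : ℝ) : ℂ)) ^ 2 - (α : ℂ) ^ 2)⁻¹ • unscaledK α β u Ω (-lam)) := by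
  have hβ : ((|β| : ℝ) : ℂ) ^ 2 = (β : ℂ) ^ 2 := by exact_mod_cast sq_abs β
  have hprod : ∀ lam : ℂ,
      unscaledK α β u Ω lam * unscaledK α β u Ω (-lam) =
        (((2 * lam - I * ((|β| : ℝ) : ℂ)) ^ 2 - (α : ℂ) ^ 2) *
          ((2 * lam + I * ((|β| : ℝ) : ℂ)) ^ 2 - (α : ℂ) ^ 2)) • 1 := by
    intro lam
    rw [unscaledK_mul_unscaledK_neg α β u Ω hΩ, ← hβ,
      Complex.sq_two_mul_sub_I_mul_sub_mul_sq_two_mul_add_I_mul_sub]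
  refine ⟨hprod, fun lam hminus hplus => ?_⟩
  rw [show 2 * -lam - I * ((|β| : ℝ) : ℂ) = -(2 * lam + I * ((|β| : ℝ) : ℂ)) by ring, neg_sq]
  exact Matrix.inv_inv_smul_of_mul_eq_smul_one (hprod lam) (sub_ne_zero.mpr hminus)
    (sub_ne_zero.mpr hplus)
end

section
/- Let α ∈ ℝ and u₀, v₀ ∈ ℂ. Define, for λ ∈ ℂ, V₀(λ) = −2iλ²σ₃ + [[i|u₀|², 2λu₀ + i v₀],[−2λu₀* + i v₀*, −i|u₀|²]] and the diagonal matrix G(λ) = [[iα − 2λ, 0],[0, iα + 2λ]]. Then V₀(−λ)·G(λ) = G(λ)·V₀(λ) holds for all λ ∈ ℂ if and only if v₀ = α·u₀. (Equivalently: the Robin boundary condition u_x = αu at x = 0 is equivalent to the boundary constraint V(t,0,−λ)G₀(λ) = G₀(λ)V(t,0,λ).) -/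
open Complex Matrix

/-- σ₃ = [[1,0],[0,−1]]. -/
def sigma3 : Matrix (Fin 2) (Fin 2) ℂ := !![1, 0; 0, -1]

/-- The t-part `V₀(λ)` of the NLS Lax pair evaluated at the boundary `x = 0`, with
`u₀ = u(t,0)` and `v₀ = u_x(t,0)`. -/
noncomputable def laxV0 (u₀ v₀ : ℂ) (lam : ℂ) : Matrix (Fin 2) (Fin 2) ℂ :=
  (-2 * I * lam ^ 2) • sigma3 +
    !![I * (((‖u₀‖ : ℝ) : ℂ) ^ 2), 2 * lam * u₀ + I * v₀;
        -2 * lam * (starRingEnd ℂ u₀) + I * (starRingEnd ℂ v₀),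
        -(I * (((‖u₀‖ : ℝ) : ℂ) ^ 2))]

/-- The unscaled Robin boundary matrix `G(λ) = (iα+2λ)·G₀(λ) = [[iα−2λ,0],[0,iα+2λ]]`. -/
noncomputable def robinG (α : ℝ) (lam : ℂ) : Matrix (Fin 2) (Fin 2) ℂ :=
  !![I * (α : ℂ) - 2 * lam, 0; 0, I * (α : ℂ) + 2 * lam]

/-! `G(λ)` is diagonal and the diagonal of `V₀(λ)` is even in `λ`, so only the off-diagonal
entries of `V₀(−λ)G(λ) − G(λ)V₀(λ)` survive; they are `4iλ(v₀ − αu₀)` and minus its conjugate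
(as `α` is real), and vanish for all `λ` exactly when `v₀ = αu₀`. -/

theorem laxV0_neg_mul_robinG_sub_robinG_mul_laxV0 (α : ℝ) (u₀ v₀ lam : ℂ) :
    laxV0 u₀ v₀ (-lam) * robinG α lam - robinG α lam * laxV0 u₀ v₀ lam =
      (4 * I * lam) • !![0, v₀ - α * u₀; -starRingEnd ℂ (v₀ - α * u₀), 0] := by
  ext i j
  fin_cases i <;> fin_cases j <;>
    simp [laxV0, robinG, sigma3] <;>
    ring

/-- The Robin boundary condition `u_x = αu` at `x = 0` is equivalent to the boundary
constraint `V(t,0,−λ)G₀(λ) = G₀(λ)V(t,0,λ)` for all `λ`. -/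
theorem robin_boundary_constraint (α : ℝ) (u₀ v₀ : ℂ) :
    (∀ lam : ℂ, laxV0 u₀ v₀ (-lam) * robinG α lam = robinG α lam * laxV0 u₀ v₀ lam) ↔
      v₀ = (α : ℂ) * u₀ := by
  simp_rw [← sub_eq_zero (a := laxV0 u₀ v₀ _ * _), laxV0_neg_mul_robinG_sub_robinG_mul_laxV0]
  constructor
  · intro h
    simpa [sub_eq_zero] using congr_fun₂ (h 1) 0 1
  · intro h lam
    simp [h, ← Matrix.ext_iff, Fin.forall_fin_two]
end

section
/- Let α, β ∈ ℝ, let λ₁ = ξ + iη with ξ ≠ 0 and η ≠ 0, and set λ̂₁ = −λ₁. Assume (2λ₁ − i|β|)² ≠ α², and set F = ((2λ₁ + i|β|)² − α²)/((2λ₁ − i|β|)² − α²). Let u₁, v₁, û₁, v̂₁ ∈ ℂ∖{0} satisfy û₁/v̂₁ = F · (u₁/v₁). Define C₁ = −(v₁/u₁) · (λ₁ − λ₁*)(λ₁ − λ̂₁)/(λ₁ − λ̂₁*) and C₂ = −(û₁*/(−v̂₁*)) · (λ̂₁* − λ₁*)(λ̂₁* − λ̂₁)/(λ̂₁* − λ₁).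 Then C₁ · C₂* = −4λ₁² · F · η²/ξ². -/
open Complex ComplexConjugate

/-!
With `λ̂ = -λ` every difference of spectral parameters in the weights is one of `±2λ`,
`±2i Im λ`, `±2 Re λ`, so both spectral factors collapse to `±2λ · i Im λ / Re λ`. The
product of the weights is then `F · 4λ² (i Im λ / Re λ)²`, the eigenvector ratios cancelling
through the boundary relation `û₁/v̂₁ = F · u₁/v₁`.
-/

/-- The spectral factor of `C₁`, with `λ̂ = -λ`. -/
theorem norming_factor_neg (z : ℂ) :
    (z - conj z) * (z - -z) / (z - conj (-z)) = 2 * z * (z.im * I / z.re) := by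
  rw [map_neg, sub_neg_eq_add, sub_neg_eq_add, sub_conj, add_conj]
  push_cast
  ring

/-- The conjugate of the spectral factor of `C₂`, with `λ̂ = -λ`. -/
theorem conj_norming_factor_neg (z : ℂ) :
    conj ((conj (-z) - conj z) * (conj (-z) - -z) / (conj (-z) - z)) =
      -(2 * z * (z.im * I / z.re)) := by
  simp only [map_div₀, map_mul, map_sub, map_neg, conj_conj]
  rw [sub_neg_eq_add, neg_add_eq_sub, ← neg_add', neg_sub_left, add_comm (conj z), add_conj,
    ← neg_sub, sub_conj]
  push_cast
  ring

theorem mul_I_div_sq (a b : ℂ) : (a * I / b) ^ 2 = -(a ^ 2 / b ^ 2) := by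
  rw [div_pow, mul_pow, I_sq]
  ring

theorem weights_product_new_bc_general (ξ η : ℝ)
    (lam₁ lamh₁ : ℂ) (hlam₁ : lam₁ = (ξ : ℂ) + (η : ℂ) * I) (hlamh₁ : lamh₁ = -lam₁)
    (F : ℂ)
    (u₁ v₁ uh₁ vh₁ : ℂ) (hu₁ : u₁ ≠ 0) (hv₁ : v₁ ≠ 0)
    (hratio : uh₁ / vh₁ = F * (u₁ / v₁))
    (C₁ C₂ : ℂ)
    (hC₁ : C₁ = -(v₁ / u₁) * ((lam₁ - starRingEnd ℂ lam₁) * (lam₁ - lamh₁) /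
      (lam₁ - starRingEnd ℂ lamh₁)))
    (hC₂ : C₂ = -(starRingEnd ℂ uh₁ / (-(starRingEnd ℂ vh₁))) *
      ((starRingEnd ℂ lamh₁ - starRingEnd ℂ lam₁) * (starRingEnd ℂ lamh₁ - lamh₁) /
        (starRingEnd ℂ lamh₁ - lam₁))) :
    C₁ * starRingEnd ℂ C₂ = -4 * lam₁ ^ 2 * F * ((η : ℂ) ^ 2 / (ξ : ℂ) ^ 2) := by
  have hre : lam₁.re = ξ := by simp [hlam₁]
  have him : lam₁.im = η := by simp [hlam₁]
  have hconjC₂ : conj C₂ = uh₁ / vh₁ * -(2 * lam₁ * (η * I / ξ)) := by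
    rw [hC₂, hlamh₁, map_mul, conj_norming_factor_neg, him, hre]
    simp [div_neg]
  have hC₁' : C₁ = -(v₁ / u₁) * (2 * lam₁ * (η * I / ξ)) := by
    rw [hC₁, hlamh₁, norming_factor_neg, him, hre]
  rw [hC₁', hconjC₂, hratio]
  calc _ = (v₁ / u₁ * (u₁ / v₁)) * F * 4 * lam₁ ^ 2 * ((η : ℂ) * I / ξ) ^ 2 := by ring
    _ = _ := by rw [div_mul_div_cancel₀ hu₁, div_self hv₁, mul_I_div_sq]; ring

/-- Product relation for the norming constants of the two-soliton solution obtained by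
dressing the zero seed with the pair `λ₁`, `λ̂₁* = −λ₁*`, subject to the new integrable
boundary condition with parameters `α, β`. -/
theorem weights_product_new_bc (α β ξ η : ℝ) (hξ : ξ ≠ 0) (hη : η ≠ 0)
    (lam₁ lamh₁ : ℂ) (hlam₁ : lam₁ = (ξ : ℂ) + (η : ℂ) * I) (hlamh₁ : lamh₁ = -lam₁)
    (hden : (2 * lam₁ - I * ((|β| : ℝ) : ℂ)) ^ 2 ≠ (α : ℂ) ^ 2)
    (F : ℂ)
    (hF : F = ((2 * lam₁ + I * ((|β| : ℝ) : ℂ)) ^ 2 - (α : ℂ) ^ 2) /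
              ((2 * lam₁ - I * ((|β| : ℝ) : ℂ)) ^ 2 - (α : ℂ) ^ 2))
    (u₁ v₁ uh₁ vh₁ : ℂ) (hu₁ : u₁ ≠ 0) (hv₁ : v₁ ≠ 0) (huh₁ : uh₁ ≠ 0) (hvh₁ : vh₁ ≠ 0)
    (hratio : uh₁ / vh₁ = F * (u₁ / v₁))
    (C₁ C₂ : ℂ)
    (hC₁ : C₁ = -(v₁ / u₁) * ((lam₁ - starRingEnd ℂ lam₁) * (lam₁ - lamh₁) /
      (lam₁ - starRingEnd ℂ lamh₁)))
    (hC₂ : C₂ = -(starRingEnd ℂ uh₁ / (-(starRingEnd ℂ vh₁))) *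
      ((starRingEnd ℂ lamh₁ - starRingEnd ℂ lam₁) * (starRingEnd ℂ lamh₁ - lamh₁) /
        (starRingEnd ℂ lamh₁ - lam₁))) :
    C₁ * starRingEnd ℂ C₂ = -4 * lam₁ ^ 2 * F * ((η : ℂ) ^ 2 / (ξ : ℂ) ^ 2) :=
  weights_product_new_bc_general ξ η lam₁ lamh₁ hlam₁ hlamh₁ F u₁ v₁ uh₁ vh₁ hu₁ hv₁ hratio C₁ C₂
    hC₁ hC₂
end

section
/- Let α, β ∈ ℝ, ξ ≠ 0, η > 0, and set λ₁ = ξ + iη and F = ((2λ₁ + i|β|)² − α²)/((2λ₁ − i|β|)² − α²), assuming (2λ₁ − i|β|)² ≠ α². Let x₁, x̂₁, φ₁, φ̂₁ ∈ ℝ and define C₁ = 2η·e^{2ηx₁ + iφ₁} and Ĉ₁ = 2η·e^{2ηx̂₁ + iφ̂₁}. If C₁ · Ĉ₁* = −4λ₁² · F · η²/ξ², then x₁ + x̂₁ = (1/(2η))·log(1 + η²/ξ²) + (1/(4η))·log( ((4ξ² − α² − (2η + |β|)²)² + (4ξ(2η + |β|))²) / ((4ξ² − α² − (2η − |β|)²)²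 + (4ξ(2η − |β|))²) ). -/
/-!
Taking moduli in the product relation removes the phases: the left side has modulus
`4η² e^{2η(x₁ + x̂₁)}`, the right side `4|λ₁|²|F| η²/ξ²`, so `e^{2η(x₁ + x̂₁)} = (1 + η²/ξ²)|F|`.
Writing both `(2λ₁ ± i|β|)² - α²` in real and imaginary parts shows that `|F|²` is the quotient of
sums of squares in the statement, and taking logarithms gives the relation.
-/

open Complex Real

lemma two_mul_add_I_mul_sq_sub_sq (ξ η c α : ℝ) :
    (2 * ((ξ : ℂ) + η * I) + I * c) ^ 2 - (α : ℂ) ^ 2 =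
      ((4 * ξ ^ 2 - α ^ 2 - (2 * η + c) ^ 2 : ℝ) : ℂ) + ((4 * ξ * (2 * η + c) : ℝ) : ℂ) * I := by
  push_cast
  linear_combination (2 * (η : ℂ) + c) ^ 2 * I_sq

lemma normSq_two_mul_add_I_mul_sq_sub_sq (ξ η c α : ℝ) :
    normSq ((2 * ((ξ : ℂ) + η * I) + I * c) ^ 2 - (α : ℂ) ^ 2) =
      (4 * ξ ^ 2 - α ^ 2 - (2 * η + c) ^ 2) ^ 2 + (4 * ξ * (2 * η + c)) ^ 2 := by
  rw [two_mul_add_I_mul_sq_sub_sq, normSq_add_mul_I]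

lemma norm_ofReal_mul_exp_add_I_mul (r x θ : ℝ) :
    ‖(r : ℂ) * exp (x + I * θ)‖ = |r| * Real.exp x := by
  rw [norm_mul, norm_real, norm_exp]
  simp

lemma normSq_add_mul_I_div_sq {ξ : ℝ} (hξ : ξ ≠ 0) (η : ℝ) :
    normSq ((ξ : ℂ) + η * I) / ξ ^ 2 = 1 + η ^ 2 / ξ ^ 2 := by
  rw [normSq_add_mul_I]
  field_simp

lemma exp_add_eq_of_mul_conj_eq {ξ η : ℝ} (hη : η ≠ 0) (x y φ ψ : ℝ) (lam F : ℂ)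
    (h : ((2 * η : ℝ) : ℂ) * exp ((2 * η * x : ℝ) + I * φ) *
        starRingEnd ℂ (((2 * η : ℝ) : ℂ) * exp ((2 * η * y : ℝ) + I * ψ)) =
      -4 * lam ^ 2 * F * ((η : ℂ) ^ 2 / (ξ : ℂ) ^ 2)) :
    Real.exp (2 * η * (x + y)) = normSq lam / ξ ^ 2 * ‖F‖ := by
  have hnorm := congrArg norm h
  rw [norm_mul, Complex.norm_conj, norm_ofReal_mul_exp_add_I_mul,
    norm_ofReal_mul_exp_add_I_mul, mul_mul_mul_comm, abs_mul_abs_self] at hnorm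
  simp only [norm_mul, norm_neg, norm_pow, norm_div, norm_real, Complex.norm_ofNat,
    Real.norm_eq_abs, sq_abs, ← normSq_eq_norm_sq] at hnorm
  rw [mul_add, Real.exp_add]
  field_simp at hnorm ⊢
  linear_combination hnorm / 4

theorem positions_relation_new_bc_general (α β ξ η : ℝ) (hξ : ξ ≠ 0) (hη : 0 < η)
    (lam₁ : ℂ) (hlam₁ : lam₁ = (ξ : ℂ) + (η : ℂ) * I)
    (F : ℂ)
    (hF : F = ((2 * lam₁ + I * ((|β| : ℝ) : ℂ)) ^ 2 - (α : ℂ) ^ 2) /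
              ((2 * lam₁ - I * ((|β| : ℝ) : ℂ)) ^ 2 - (α : ℂ) ^ 2))
    (x₁ xh₁ φ₁ φh₁ : ℝ) (C₁ Ch₁ : ℂ)
    (hC₁ : C₁ = (2 * η : ℝ) * Complex.exp ((2 * η * x₁ : ℝ) + I * (φ₁ : ℂ)))
    (hCh₁ : Ch₁ = (2 * η : ℝ) * Complex.exp ((2 * η * xh₁ : ℝ) + I * (φh₁ : ℂ)))
    (hprod : C₁ * starRingEnd ℂ Ch₁ = -4 * lam₁ ^ 2 * F * ((η : ℂ) ^ 2 / (ξ : ℂ) ^ 2)) :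
    x₁ + xh₁ = (1 / (2 * η)) * Real.log (1 + η ^ 2 / ξ ^ 2) +
      (1 / (4 * η)) * Real.log
        (((4 * ξ ^ 2 - α ^ 2 - (2 * η + |β|) ^ 2) ^ 2 + (4 * ξ * (2 * η + |β|)) ^ 2) /
         ((4 * ξ ^ 2 - α ^ 2 - (2 * η - |β|) ^ 2) ^ 2 + (4 * ξ * (2 * η - |β|)) ^ 2)) := by
  subst hC₁ hCh₁
  have hexp := exp_add_eq_of_mul_conj_eq hη.ne' x₁ xh₁ φ₁ φh₁ lam₁ F hprod
  rw [hlam₁, normSq_add_mul_I_div_sq hξ] at hexp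
  have hnormSq_F : normSq F =
      ((4 * ξ ^ 2 - α ^ 2 - (2 * η + |β|) ^ 2) ^ 2 + (4 * ξ * (2 * η + |β|)) ^ 2) /
        ((4 * ξ ^ 2 - α ^ 2 - (2 * η - |β|) ^ 2) ^ 2 + (4 * ξ * (2 * η - |β|)) ^ 2) := by
    have hminus := normSq_two_mul_add_I_mul_sq_sub_sq ξ η (-|β|) α
    simp only [ofReal_neg, mul_neg, ← sub_eq_add_neg] at hminus
    rw [hF, hlam₁, normSq_div, normSq_two_mul_add_I_mul_sq_sub_sq, hminus]
  have hF_ne : ‖F‖ ≠ 0 := right_ne_zero_of_mul (hexp ▸ (Real.exp_pos _).ne')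
  have hlog := congrArg Real.log hexp
  rw [Real.log_exp, Real.log_mul (by positivity) hF_ne] at hlog
  rw [← hnormSq_F, normSq_eq_norm_sq, Real.log_pow, Nat.cast_ofNat]
  generalize Real.log (1 + η ^ 2 / ξ ^ 2) = L at hlog ⊢
  field_simp
  linear_combination 4 * hlog

/-- Relation between the initial positions of a soliton and its mirror soliton for the
new integrable boundary condition with parameters `α, β`. -/
theorem positions_relation_new_bc (α β ξ η : ℝ) (hξ : ξ ≠ 0) (hη : 0 < η)
    (lam₁ : ℂ) (hlam₁ : lam₁ = (ξ : ℂ) + (η : ℂ) * I)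
    (hden : (2 * lam₁ - I * ((|β| : ℝ) : ℂ)) ^ 2 ≠ (α : ℂ) ^ 2)
    (F : ℂ)
    (hF : F = ((2 * lam₁ + I * ((|β| : ℝ) : ℂ)) ^ 2 - (α : ℂ) ^ 2) /
              ((2 * lam₁ - I * ((|β| : ℝ) : ℂ)) ^ 2 - (α : ℂ) ^ 2))
    (x₁ xh₁ φ₁ φh₁ : ℝ) (C₁ Ch₁ : ℂ)
    (hC₁ : C₁ = (2 * η : ℝ) * Complex.exp ((2 * η * x₁ : ℝ) + I * (φ₁ : ℂ)))
    (hCh₁ : Ch₁ = (2 * η : ℝ) * Complex.exp ((2 * η * xh₁ : ℝ) + I * (φh₁ : ℂ)))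
    (hprod : C₁ * starRingEnd ℂ Ch₁ = -4 * lam₁ ^ 2 * F * ((η : ℂ) ^ 2 / (ξ : ℂ) ^ 2)) :
    x₁ + xh₁ = (1 / (2 * η)) * Real.log (1 + η ^ 2 / ξ ^ 2) +
      (1 / (4 * η)) * Real.log
        (((4 * ξ ^ 2 - α ^ 2 - (2 * η + |β|) ^ 2) ^ 2 + (4 * ξ * (2 * η + |β|)) ^ 2) /
         ((4 * ξ ^ 2 - α ^ 2 - (2 * η - |β|) ^ 2) ^ 2 + (4 * ξ * (2 * η - |β|)) ^ 2)) :=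
  positions_relation_new_bc_general α β ξ η hξ hη lam₁ hlam₁ F hF x₁ xh₁ φ₁ φh₁ C₁ Ch₁ hC₁ hCh₁
    hprod
end

section
/- Let α ∈ ℝ, ξ ≠ 0, η > 0, and set λ₁ = ξ + iη and F = (iα − 2λ₁)/(iα + 2λ₁), assuming iα + 2λ₁ ≠ 0. Let x₁, x̂₁, φ₁, φ̂₁ ∈ ℝ and define C₁ = 2η·e^{2ηx₁ + iφ₁} and Ĉ₁ = 2η·e^{2ηx̂₁ + iφ̂₁}. If C₁ · Ĉ₁* = −4λ₁² · F · η²/ξ², then x₁ + x̂₁ = (1/(2η))·log(1 + η²/ξ²) + (1/(4η))·log( ((2ξ)² + (α − 2η)²) / ((2ξ)² + (α + 2η)²) ). -/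
/-!
Only the moduli of the two sides of the product relation matter. On the left,
`|C₁ Ĉ₁*| = 4η² e^{2η(x₁ + x̂₁)}`; on the right, `|λ₁|² = ξ² + η²` and `|F|` is the square root of
`((2ξ)² + (α - 2η)²) / ((2ξ)² + (α + 2η)²)`. Equating and taking logarithms gives the relation.
-/

open Complex Real

lemma norm_ofReal_mul_exp_ofReal_add_I_mul (c a φ : ℝ) :
    ‖(c : ℂ) * exp (a + I * φ)‖ = |c| * Real.exp a := by
  simp [Complex.norm_exp]

lemma norm_mul_conj_ofReal_mul_exp (c a b φ ψ : ℝ) :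
    ‖(c : ℂ) * exp (a + I * φ) * starRingEnd ℂ ((c : ℂ) * exp (b + I * ψ))‖ =
      c ^ 2 * Real.exp (a + b) := by
  rw [norm_mul, Complex.norm_conj, norm_ofReal_mul_exp_ofReal_add_I_mul,
    norm_ofReal_mul_exp_ofReal_add_I_mul, Real.exp_add, ← sq_abs c]
  ring

lemma norm_I_mul_sub_two_mul (α ξ η : ℝ) :
    ‖I * α - 2 * (ξ + η * I)‖ = √((2 * ξ) ^ 2 + (α - 2 * η) ^ 2) := by
  have h : I * α - 2 * (ξ + η * I) = ((-(2 * ξ) : ℝ) : ℂ) + ((α - 2 * η : ℝ) : ℂ) * I := by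
    push_cast; ring
  rw [h, Complex.norm_add_mul_I, neg_sq]

lemma norm_I_mul_add_two_mul (α ξ η : ℝ) :
    ‖I * α + 2 * (ξ + η * I)‖ = √((2 * ξ) ^ 2 + (α + 2 * η) ^ 2) := by
  have h : I * α + 2 * (ξ + η * I) = ((2 * ξ : ℝ) : ℂ) + ((α + 2 * η : ℝ) : ℂ) * I := by
    push_cast; ring
  rw [h, Complex.norm_add_mul_I]

lemma norm_robin_coeff (α ξ η : ℝ) :
    ‖(I * α - 2 * (ξ + η * I)) / (I * α + 2 * (ξ + η * I))‖ =
      √(((2 * ξ) ^ 2 + (α - 2 * η) ^ 2) / ((2 * ξ) ^ 2 + (α + 2 * η) ^ 2)) := by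
  rw [norm_div, norm_I_mul_sub_two_mul, norm_I_mul_add_two_mul, Real.sqrt_div' _ (by positivity)]

lemma norm_robin_weight_product (α ξ η : ℝ) (hξ : ξ ≠ 0) :
    ‖-4 * (ξ + η * I) ^ 2 * ((I * α - 2 * (ξ + η * I)) / (I * α + 2 * (ξ + η * I))) *
        ((η : ℂ) ^ 2 / (ξ : ℂ) ^ 2)‖ =
      (2 * η) ^ 2 * ((1 + η ^ 2 / ξ ^ 2) *
        √(((2 * ξ) ^ 2 + (α - 2 * η) ^ 2) / ((2 * ξ) ^ 2 + (α + 2 * η) ^ 2))) := by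
  have hlam : ‖(ξ : ℂ) + η * I‖ ^ 2 = ξ ^ 2 + η ^ 2 := by
    rw [Complex.sq_norm, Complex.normSq_add_mul_I]
  rw [norm_mul, norm_mul, norm_mul, norm_robin_coeff, norm_pow, hlam]
  simp only [norm_div, norm_neg, norm_pow, Complex.norm_real, Complex.norm_ofNat,
    Real.norm_eq_abs, sq_abs]
  field_simp
  ring

lemma eq_of_exp_mul_eq_mul_sqrt {k s A B : ℝ} (hk : 0 < k) (hA : 0 < A) (hB : 0 < B)
    (h : Real.exp (k * s) = A * √B) :
    s = 1 / k * Real.log A + 1 / (2 * k) * Real.log B := by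
  have hlog : k * s = Real.log A + Real.log B / 2 := by
    rw [← Real.log_exp (k * s), h, Real.log_mul hA.ne' (by positivity), Real.log_sqrt hB.le]
  field_simp
  linarith

theorem positions_relation_robin_bc_general (α ξ η : ℝ) (hξ : ξ ≠ 0) (hη : 0 < η)
    (lam₁ : ℂ) (hlam₁ : lam₁ = (ξ : ℂ) + (η : ℂ) * I)
    (F : ℂ)
    (hF : F = (I * (α : ℂ) - 2 * lam₁) / (I * (α : ℂ) + 2 * lam₁))
    (x₁ xh₁ φ₁ φh₁ : ℝ) (C₁ Ch₁ : ℂ)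
    (hC₁ : C₁ = (2 * η : ℝ) * Complex.exp ((2 * η * x₁ : ℝ) + I * (φ₁ : ℂ)))
    (hCh₁ : Ch₁ = (2 * η : ℝ) * Complex.exp ((2 * η * xh₁ : ℝ) + I * (φh₁ : ℂ)))
    (hprod : C₁ * starRingEnd ℂ Ch₁ = -4 * lam₁ ^ 2 * F * ((η : ℂ) ^ 2 / (ξ : ℂ) ^ 2)) :
    x₁ + xh₁ = (1 / (2 * η)) * Real.log (1 + η ^ 2 / ξ ^ 2) +
      (1 / (4 * η)) * Real.log
        (((2 * ξ) ^ 2 + (α - 2 * η) ^ 2) / ((2 * ξ) ^ 2 + (α + 2 * η) ^ 2)) := by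
  subst hlam₁ hF hC₁ hCh₁
  have hnorm := congrArg norm hprod
  rw [norm_mul_conj_ofReal_mul_exp, norm_robin_weight_product α ξ η hξ, ← mul_add] at hnorm
  have hexp := mul_left_cancel₀ (by positivity) hnorm
  rw [show (4 : ℝ) * η = 2 * (2 * η) by ring]
  exact eq_of_exp_mul_eq_mul_sqrt (by positivity) (by positivity) (by positivity) hexp

/-- Relation between the initial positions of a soliton and its mirror soliton for the
Robin boundary condition `u_x(t,0) = α u(t,0)`. -/
theorem positions_relation_robin_bc (α ξ η : ℝ) (hξ : ξ ≠ 0) (hη : 0 < η)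
    (lam₁ : ℂ) (hlam₁ : lam₁ = (ξ : ℂ) + (η : ℂ) * I)
    (hden : I * (α : ℂ) + 2 * lam₁ ≠ 0)
    (F : ℂ)
    (hF : F = (I * (α : ℂ) - 2 * lam₁) / (I * (α : ℂ) + 2 * lam₁))
    (x₁ xh₁ φ₁ φh₁ : ℝ) (C₁ Ch₁ : ℂ)
    (hC₁ : C₁ = (2 * η : ℝ) * Complex.exp ((2 * η * x₁ : ℝ) + I * (φ₁ : ℂ)))
    (hCh₁ : Ch₁ = (2 * η : ℝ) * Complex.exp ((2 * η * xh₁ : ℝ) + I * (φh₁ : ℂ)))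
    (hprod : C₁ * starRingEnd ℂ Ch₁ = -4 * lam₁ ^ 2 * F * ((η : ℂ) ^ 2 / (ξ : ℂ) ^ 2)) :
    x₁ + xh₁ = (1 / (2 * η)) * Real.log (1 + η ^ 2 / ξ ^ 2) +
      (1 / (4 * η)) * Real.log
        (((2 * ξ) ^ 2 + (α - 2 * η) ^ 2) / ((2 * ξ) ^ 2 + (α + 2 * η) ^ 2)) :=
  positions_relation_robin_bc_general α ξ η hξ hη lam₁ hlam₁ F hF x₁ xh₁ φ₁ φh₁ C₁ Ch₁ hC₁ hCh₁
    hprod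
end
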